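/- arXiv:2411.04500 — 4 statements merged into one kernel-verified Lean document; each statement's English description precedes it below -/
import Mathlib

section
/- Let α > 0 and s > α + 1 be real numbers. Then there exists a constant C > 0, depending only on α and s, such that for every δ ∈ (0,1] one has ∑_{k ∈ ℤ² ∖ {0}} ‖k‖^{2α} / (1 + δ·‖k‖^{2s}) ≤ C · δ^{-(α+1)/s}; in particular this series converges for every δ ∈ (0,1]. -/
/-!
Write `m = max |k₁| |k₂|` for the sup norm of `k ∈ ℤ²`. Since `m ≤ ‖k‖ ≤ √2 m` and exactly `8m`
lattice points have sup norm `m ≥ 1`, the lattice sum is at most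
`8 · 2^α ∑ₙ n^(2α+1) / (1 + δ n^(2s))`.

For the one-dimensional sum put `β = δ^(-1/(2s)) ≥ 1` and `x = n/β`, so that the summand is
`β^(2α+1) x^(2α+1) / (1 + x^(2s)) ≤ 2^(2s) β^(2α+1) (1 + x)^(2α+1-2s)`. Grouping `n` into blocks
of length `N = ⌈β⌉ ≤ 2β`, on the block `n / N = i` this is at most
`2^(2s) β^(2α+1) (i+1)^(2α+1-2s)`, which is summable in `i` because `2s > 2α + 2`. Summing the
`N` terms of each block gives `O(β^(2α+2)) = O(δ^(-(α+1)/s))`.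
-/

open scoped ENNReal

/-- Euclidean norm of a lattice point `k ∈ ℤ²` viewed inside `ℝ²`. -/
noncomputable def latticeNorm (k : ℤ × ℤ) : ℝ :=
  Real.sqrt ((k.1 : ℝ) ^ 2 + (k.2 : ℝ) ^ 2)

open Finset Real

theorem rpow_div_one_add_rpow_le {x a p : ℝ} (hx : 0 ≤ x) (ha : 0 ≤ a) (hap : a ≤ p) :
    x ^ a / (1 + x ^ p) ≤ 2 ^ p * (1 + x) ^ (a - p) := by
  have hap' : a - p ≤ 0 := by linarith
  have h2 : (2 : ℝ) ^ p * 2 ^ (a - p) = 2 ^ a := by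
    rw [← rpow_add two_pos]; ring_nf
  rcases le_total x 1 with hx1 | hx1
  · calc x ^ a / (1 + x ^ p) ≤ x ^ a :=
          div_le_self (by positivity) (le_add_of_nonneg_right (by positivity))
      _ ≤ 1 := rpow_le_one hx hx1 ha
      _ ≤ 2 ^ a := one_le_rpow one_le_two ha
      _ = 2 ^ p * 2 ^ (a - p) := h2.symm
      _ ≤ 2 ^ p * (1 + x) ^ (a - p) := by
        gcongr 2 ^ p * ?_
        exact rpow_le_rpow_of_nonpos (by positivity) (by linarith) hap'
  · have hx0 : 0 < x := by linarith
    calc x ^ a / (1 + x ^ p) ≤ x ^ a / x ^ p :=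
          div_le_div_of_nonneg_left (by positivity) (by positivity) (by linarith)
      _ = x ^ (a - p) := (rpow_sub hx0 a p).symm
      _ ≤ 2 ^ a * x ^ (a - p) := le_mul_of_one_le_left (by positivity) (one_le_rpow one_le_two ha)
      _ = 2 ^ p * (2 * x) ^ (a - p) := by rw [mul_rpow zero_le_two hx, ← mul_assoc, h2]
      _ ≤ 2 ^ p * (1 + x) ^ (a - p) := by
        gcongr 2 ^ p * ?_
        exact rpow_le_rpow_of_nonpos (by positivity) (by linarith) hap'

theorem ENNReal.tsum_comp_nat_div (f : ℕ → ℝ≥0∞) (N : ℕ) [NeZero N] :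
    ∑' n, f (n / N) = N * ∑' i, f i := by
  rw [← (Nat.divModEquiv N).symm.tsum_eq, ENNReal.tsum_prod', ← ENNReal.tsum_mul_left]
  have hdiv (i : ℕ) (r : Fin N) : (i * N + r) / N = i := by
    rw [Nat.add_comm, Nat.add_mul_div_right _ _ (NeZero.pos N), Nat.div_eq_of_lt r.2, zero_add]
  simp [hdiv]

theorem tsum_comp_max_natAbs (g : ℕ → ℝ≥0∞) :
    ∑' k : ℤ × ℤ, g (max k.1.natAbs k.2.natAbs) = ∑' n, #(box n : Finset (ℤ × ℤ)) * g n := by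
  rw [← ENNReal.tsum_fiberwise _ (fun k : ℤ × ℤ ↦ max k.1.natAbs k.2.natAbs)]
  refine tsum_congr fun n ↦ ?_
  have hfiber :
      (fun k : ℤ × ℤ ↦ max k.1.natAbs k.2.natAbs) ⁻¹' {n} = ↑(box n : Finset (ℤ × ℤ)) := by
    ext k; simp
  rw [tsum_congr (fun k : _ ⁻¹' {n} ↦ congrArg g k.2), ENNReal.tsum_set_const, hfiber,
    Set.encard_coe_eq_coe_finsetCard]
  rfl

theorem le_latticeNorm (k : ℤ × ℤ) : ((max k.1.natAbs k.2.natAbs : ℕ) : ℝ) ≤ latticeNorm k := by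
  simp only [Nat.cast_max, Nat.cast_natAbs, Int.cast_abs, latticeNorm]
  apply max_le <;> apply Real.le_sqrt_of_sq_le <;> simp only [sq_abs] <;> nlinarith

theorem latticeNorm_le (k : ℤ × ℤ) :
    latticeNorm k ≤ √2 * ((max k.1.natAbs k.2.natAbs : ℕ) : ℝ) := by
  simp only [Nat.cast_max, Nat.cast_natAbs, Int.cast_abs, latticeNorm]
  set m := max |(k.1 : ℝ)| |(k.2 : ℝ)|
  rw [← sqrt_sq (by positivity : 0 ≤ m), ← sqrt_mul zero_le_two]
  apply sqrt_le_sqrt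
  have h1 : (k.1 : ℝ) ^ 2 ≤ m ^ 2 := by
    rw [← sq_abs]; exact pow_le_pow_left₀ (abs_nonneg _) (le_max_left _ _) 2
  have h2 : (k.2 : ℝ) ^ 2 ≤ m ^ 2 := by
    rw [← sq_abs]; exact pow_le_pow_left₀ (abs_nonneg _) (le_max_right _ _) 2
  linarith

theorem tsum_rpow_div_one_add_mul_rpow_le {a p δ : ℝ} (ha : 0 ≤ a) (hap : a ≤ p) (hp : 0 < p)
    (hδ : δ ∈ Set.Ioc 0 1) :
    ∑' n : ℕ, ENNReal.ofReal ((n : ℝ) ^ a / (1 + δ * (n : ℝ) ^ p)) ≤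
      ENNReal.ofReal (2 ^ (p + 1) * δ ^ (-(a + 1) / p)) *
        ∑' i : ℕ, ENNReal.ofReal (((i : ℝ) + 1) ^ (a - p)) := by
  obtain ⟨hδ0, hδ1⟩ := hδ
  set β := δ ^ (-1 / p)
  have hβ1 : 1 ≤ β := one_le_rpow_of_pos_of_le_one_of_nonpos hδ0 hδ1
    (div_nonpos_of_nonpos_of_nonneg (by norm_num) hp.le)
  have hβ0 : 0 < β := by linarith
  have hδβ : δ = (β ^ p)⁻¹ := by
    rw [← rpow_mul hδ0.le, div_mul_cancel₀ _ hp.ne', rpow_neg_one, inv_inv]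
  have hβδ : β ^ (a + 1) = δ ^ (-(a + 1) / p) := by
    rw [← rpow_mul hδ0.le]; congr 1; ring
  set N := ⌈β⌉₊
  have : NeZero N := ⟨(Nat.ceil_pos.mpr hβ0).ne'⟩
  have hβN : β ≤ N := Nat.le_ceil β
  have hN : (N : ℝ) ≤ 2 * β := by linarith [Nat.ceil_lt_add_one hβ0.le]
  have hterm (n : ℕ) :
      (n : ℝ) ^ a / (1 + δ * (n : ℝ) ^ p) ≤ 2 ^ p * β ^ a * (((n / N : ℕ) : ℝ) + 1) ^ (a - p) := by
    have hblock : ((n / N : ℕ) : ℝ) ≤ n / β :=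
      Nat.cast_div_le.trans (div_le_div_of_nonneg_left (by positivity) hβ0 hβN)
    calc (n : ℝ) ^ a / (1 + δ * (n : ℝ) ^ p) = β ^ a * ((n / β) ^ a / (1 + (n / β) ^ p)) := by
          rw [div_rpow (by positivity) hβ0.le, div_rpow (by positivity) hβ0.le, hδβ]
          field_simp
      _ ≤ β ^ a * (2 ^ p * (1 + n / β) ^ (a - p)) := by
          gcongr; exact rpow_div_one_add_rpow_le (by positivity) ha hap
      _ ≤ β ^ a * (2 ^ p * (((n / N : ℕ) : ℝ) + 1) ^ (a - p)) := by
          gcongr β ^ a * (2 ^ p * ?_)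
          exact rpow_le_rpow_of_nonpos (by positivity) (by linarith) (by linarith)
      _ = 2 ^ p * β ^ a * (((n / N : ℕ) : ℝ) + 1) ^ (a - p) := by ring
  calc ∑' n : ℕ, ENNReal.ofReal ((n : ℝ) ^ a / (1 + δ * (n : ℝ) ^ p))
      ≤ ∑' n : ℕ, ENNReal.ofReal (2 ^ p * β ^ a) *
          ENNReal.ofReal ((((n / N : ℕ) : ℝ) + 1) ^ (a - p)) := by
        refine ENNReal.tsum_le_tsum fun n ↦ ?_
        rw [← ENNReal.ofReal_mul (by positivity)]
        exact ENNReal.ofReal_le_ofReal (hterm n)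
    _ = ENNReal.ofReal (2 ^ p * β ^ a) *
          (N * ∑' i : ℕ, ENNReal.ofReal (((i : ℝ) + 1) ^ (a - p))) := by
        rw [ENNReal.tsum_mul_left,
          ENNReal.tsum_comp_nat_div (fun i ↦ ENNReal.ofReal (((i : ℝ) + 1) ^ (a - p)))]
    _ ≤ ENNReal.ofReal (2 ^ (p + 1) * δ ^ (-(a + 1) / p)) *
          ∑' i : ℕ, ENNReal.ofReal (((i : ℝ) + 1) ^ (a - p)) := by
        rw [← mul_assoc, ← ENNReal.ofReal_natCast, ← ENNReal.ofReal_mul (by positivity)]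
        refine mul_le_mul_left (ENNReal.ofReal_le_ofReal ?_) _
        calc 2 ^ p * β ^ a * N ≤ 2 ^ p * β ^ a * (2 * β) := by gcongr
          _ = 2 ^ (p + 1) * β ^ (a + 1) := by
            rw [rpow_add_one two_ne_zero, rpow_add_one hβ0.ne']; ring
          _ = _ := by rw [hβδ]

theorem latticeNorm_summand_le {α s δ : ℝ} (hα : 0 ≤ α) (hs : 0 ≤ s) (hδ : 0 ≤ δ) (k : ℤ × ℤ) :
    latticeNorm k ^ (2 * α) / (1 + δ * latticeNorm k ^ (2 * s)) ≤
      2 ^ α * ((max k.1.natAbs k.2.natAbs : ℕ) : ℝ) ^ (2 * α) /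
        (1 + δ * ((max k.1.natAbs k.2.natAbs : ℕ) : ℝ) ^ (2 * s)) := by
  have hm := le_latticeNorm k
  have hsqrt : √2 ^ (2 * α) = 2 ^ α := by
    rw [rpow_mul (sqrt_nonneg 2), rpow_two, sq_sqrt zero_le_two]
  refine div_le_div₀ (by positivity) ?_ (by positivity) (by gcongr)
  calc latticeNorm k ^ (2 * α) ≤ (√2 * ((max k.1.natAbs k.2.natAbs : ℕ) : ℝ)) ^ (2 * α) :=
        rpow_le_rpow (hm.trans' (by positivity)) (latticeNorm_le k) (by positivity)
    _ = _ := by rw [mul_rpow (sqrt_nonneg 2) (by positivity), hsqrt]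

theorem tsum_latticeNorm_le {α s δ : ℝ} (hα : 0 < α) (hs : 0 ≤ s) (hδ : 0 ≤ δ) :
    ∑' k : {k : ℤ × ℤ // k ≠ 0},
        ENNReal.ofReal (latticeNorm k ^ (2 * α) / (1 + δ * latticeNorm k ^ (2 * s))) ≤
      ENNReal.ofReal (8 * 2 ^ α) *
        ∑' n : ℕ, ENNReal.ofReal ((n : ℝ) ^ (2 * α + 1) / (1 + δ * (n : ℝ) ^ (2 * s))) := by
  set G : ℕ → ℝ≥0∞ := fun n ↦
    ENNReal.ofReal (2 ^ α * (n : ℝ) ^ (2 * α) / (1 + δ * (n : ℝ) ^ (2 * s)))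
  have hbox (n : ℕ) : #(box n : Finset (ℤ × ℤ)) * G n =
      ENNReal.ofReal (8 * 2 ^ α) *
        ENNReal.ofReal ((n : ℝ) ^ (2 * α + 1) / (1 + δ * (n : ℝ) ^ (2 * s))) := by
    rcases Nat.eq_zero_or_pos n with rfl | hn
    · simp [G, zero_rpow (by positivity : 2 * α ≠ 0), zero_rpow (by positivity : 2 * α + 1 ≠ 0)]
    · rw [Int.card_box hn.ne', ← ENNReal.ofReal_natCast, ← ENNReal.ofReal_mul (by positivity),
        ← ENNReal.ofReal_mul (by positivity), rpow_add_one (by positivity)]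
      congr 1
      push_cast
      ring
  calc ∑' k : {k : ℤ × ℤ // k ≠ 0},
        ENNReal.ofReal (latticeNorm k ^ (2 * α) / (1 + δ * latticeNorm k ^ (2 * s)))
      ≤ ∑' k : ℤ × ℤ,
          ENNReal.ofReal (latticeNorm k ^ (2 * α) / (1 + δ * latticeNorm k ^ (2 * s))) :=
        ENNReal.tsum_comp_le_tsum_of_injective Subtype.val_injective _
    _ ≤ ∑' k : ℤ × ℤ, G (max k.1.natAbs k.2.natAbs) :=
        ENNReal.tsum_le_tsum fun k ↦
          ENNReal.ofReal_le_ofReal (latticeNorm_summand_le hα.le hs hδ k)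
    _ = _ := by rw [tsum_comp_max_natAbs, tsum_congr hbox, ENNReal.tsum_mul_left]

/-- Blow-up estimate for `∑_{k ≠ 0} ‖k‖^{2α} / (1 + δ‖k‖^{2s})`. -/
theorem stmt_0 (α s : ℝ) (hα : 0 < α) (hs : α + 1 < s) :
    ∃ C : ℝ, 0 < C ∧ ∀ δ : ℝ, δ ∈ Set.Ioc (0 : ℝ) 1 →
      (∑' k : {k : ℤ × ℤ // k ≠ 0},
          ENNReal.ofReal
            (latticeNorm k ^ (2 * α) / (1 + δ * latticeNorm k ^ (2 * s))))
        ≤ ENNReal.ofReal (C * δ ^ (-(α + 1) / s)) := by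
  have hζ : Summable fun i : ℕ ↦ ((i : ℝ) + 1) ^ (2 * α + 1 - 2 * s) := by
    simpa using (summable_nat_add_iff 1).mpr
      (Real.summable_nat_rpow.mpr (by linarith : 2 * α + 1 - 2 * s < -1))
  set ζ := ∑' i : ℕ, ((i : ℝ) + 1) ^ (2 * α + 1 - 2 * s) with hζdef
  have hζ0 : 0 < ζ := hζ.tsum_pos (fun i ↦ by positivity) 0 (by positivity)
  refine ⟨8 * 2 ^ α * 2 ^ (2 * s + 1) * ζ, by positivity, fun δ hδ ↦ ?_⟩
  have hδ0 : 0 < δ := hδ.1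
  have hexp : -(2 * α + 1 + 1) / (2 * s) = -(α + 1) / s := by
    field_simp
    ring
  calc _ ≤ ENNReal.ofReal (8 * 2 ^ α) *
        ∑' n : ℕ, ENNReal.ofReal ((n : ℝ) ^ (2 * α + 1) / (1 + δ * (n : ℝ) ^ (2 * s))) :=
        tsum_latticeNorm_le hα (by linarith) hδ0.le
    _ ≤ ENNReal.ofReal (8 * 2 ^ α) *
        (ENNReal.ofReal (2 ^ (2 * s + 1) * δ ^ (-(2 * α + 1 + 1) / (2 * s))) *
          ∑' i : ℕ, ENNReal.ofReal (((i : ℝ) + 1) ^ (2 * α + 1 - 2 * s))) := by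
        gcongr
        exact tsum_rpow_div_one_add_mul_rpow_le (by positivity) (by linarith) (by linarith) hδ
    _ = ENNReal.ofReal (8 * 2 ^ α * 2 ^ (2 * s + 1) * ζ * δ ^ (-(α + 1) / s)) := by
        rw [← ENNReal.ofReal_tsum_of_nonneg (fun i ↦ by positivity) hζ, ← hζdef, hexp,
          ← ENNReal.ofReal_mul (by positivity), ← ENNReal.ofReal_mul (by positivity)]
        ring_nf
end

section
/- Let ι be a nonempty finite type, ε > 0, λ : ι → ℝ, and let B : ι → ι → ι → ℝ satisfy B k l n = −(B l k n) for all k, l, n ∈ ι and B k l k = 0 for all k, l ∈ ι. Let μ be the product measure on ι → ℝ whose coordinate i is distributed as gaussianReal 0 (ε/2) for every i ∈ ι, and define (Lh)(x) := ∑_{i∈ι} λ(i)·( −x_i·∂_i h(x) + (ε/2)·∂_i² h(x) ) − ∑_{k,l,n∈ι} B k l n · x_l · x_n · ∂_k h(x). Then for every twice continuously differentiable g : (ι → ℝ) → ℝ that is bounded together with all its first- and second-order partial derivatives, one has ∫ (Lg) dμ = 0. -/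
open MeasureTheory ProbabilityTheory

/-- Partial derivative in the `i`-th coordinate direction: the derivative at `t = 0` of
`t ↦ h (x + t eᵢ)`. -/
noncomputable def pderiv' {ι : Type*} [DecidableEq ι] (i : ι)
    (h : (ι → ℝ) → ℝ) (x : ι → ℝ) : ℝ :=
  deriv (fun t : ℝ => h (x + t • (Pi.single i 1 : ι → ℝ))) 0

/-- The generator of the Galerkin approximation of the stochastic SQG equation:
`(Lh)(x) = ∑ᵢ λᵢ (−xᵢ ∂ᵢh + (ε/2) ∂ᵢ²h) − ∑_{k,l,n} B k l n · x_l · x_n · ∂_k h`. -/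
noncomputable def sqgGen {ι : Type*} [DecidableEq ι] [Fintype ι] (ε : ℝ)
    (lam : ι → ℝ) (B : ι → ι → ι → ℝ) (h : (ι → ℝ) → ℝ) (x : ι → ℝ) : ℝ :=
  (∑ i, lam i * (-(x i) * pderiv' i h x + (ε / 2) * pderiv' i (pderiv' i h) x))
    - ∑ k, ∑ l, ∑ n, B k l n * x l * x n * pderiv' k h x

/-!
Everything rests on Stein's identity for `𝒢(m, v)`: `∫ (t - m) f(t) = v ∫ f'(t)`, which is
integration by parts against the density, whose derivative is `-(t - m)/v` times itself.
Integrating it along one coordinate of the product measure gives `∫ xᵢ ∂ᵢg = (ε/2) ∫ ∂ᵢ²g`,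
which kills the Ornstein–Uhlenbeck part of `L`. In the nonlinear part the terms with `l = k` or
`n = k` vanish because `B k k n = B k l k = 0`; in the others `x_l x_n` does not depend on `x_k`,
so Stein gives `(ε/2) ∫ x_l x_n ∂_k g = ∫ x_k x_l x_n g`, and summing this quantity, symmetric in
`(k, l)`, against `B k l n`, antisymmetric in `(k, l)`, gives zero.
-/

open Real Set
open scoped NNReal ENNReal

theorem hasDerivAt_gaussianPDFReal (m : ℝ) {v : ℝ≥0} (hv : v ≠ 0) (t : ℝ) :
    HasDerivAt (gaussianPDFReal m v) (-((t - m) / v) * gaussianPDFReal m v t) t := by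
  have hv' : (v : ℝ) ≠ 0 := by exact_mod_cast hv
  have h := (((hasDerivAt_id t).sub_const m).pow 2).neg.div_const (2 * (v : ℝ)) |>.exp
    |>.const_mul (√(2 * π * v))⁻¹
  refine h.congr_deriv ?_
  simp only [gaussianPDFReal, id, Pi.neg_apply, Pi.pow_apply]
  field_simp
  ring

theorem MeasureTheory.Integrable.gaussianPDFReal_mul {m : ℝ} {v : ℝ≥0} (hv : v ≠ 0) {f : ℝ → ℝ}
    (hf : Integrable f (gaussianReal m v)) :
    Integrable (fun t => gaussianPDFReal m v t * f t) := by
  rw [gaussianReal_of_var_ne_zero m hv, integrable_withDensity_iff_integrable_smul'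
    (measurable_gaussianPDF m v) (ae_of_all _ fun _ => gaussianPDF_lt_top)] at hf
  simpa using hf

theorem integral_sub_mul_gaussianReal (m : ℝ) (v : ℝ≥0) {f f' : ℝ → ℝ}
    (hf : ∀ t, HasDerivAt f (f' t) t) (hfi : Integrable f (gaussianReal m v))
    (hf'i : Integrable f' (gaussianReal m v))
    (htf : Integrable (fun t => (t - m) * f t) (gaussianReal m v)) :
    ∫ t, (t - m) * f t ∂gaussianReal m v = v * ∫ t, f' t ∂gaussianReal m v := by
  rcases eq_or_ne v 0 with rfl | hv
  · simp [gaussianReal_zero_var]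
  have hv' : (v : ℝ) ≠ 0 := by exact_mod_cast hv
  set p := gaussianPDFReal m v
  have ibp := integral_mul_deriv_eq_deriv_mul_of_integrable (u := f) (v := p)
    (v' := fun t => -((t - m) / v) * p t) (fun t _ => hf t)
    (fun t _ => hasDerivAt_gaussianPDFReal m hv t)
    (((htf.gaussianPDFReal_mul hv).const_mul (-(v : ℝ)⁻¹)).congr
      (ae_of_all _ fun t => by simp only [Pi.mul_apply]; field_simp; ring))
    ((hf'i.gaussianPDFReal_mul hv).congr (ae_of_all _ fun t => mul_comm _ _))
    ((hfi.gaussianPDFReal_mul hv).congr (ae_of_all _ fun t => mul_comm _ _))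
  simp only [integral_gaussianReal_eq_integral_smul hv, smul_eq_mul]
  calc ∫ t, p t * ((t - m) * f t)
      = -v * ∫ t, f t * (-((t - m) / v) * p t) := by
        rw [← integral_const_mul]; congr 1; ext t; field_simp
    _ = v * ∫ t, p t * f' t := by simp only [ibp, mul_comm (f' _)]; ring

section UpdateCoordinate

variable {ι : Type*} [Fintype ι] [DecidableEq ι] {α : ι → Type*} [∀ i, MeasurableSpace (α i)]
  (μ : ∀ i, Measure (α i)) [∀ i, IsProbabilityMeasure (μ i)]

theorem measurePreserving_update (i : ι) :
    MeasurePreserving (fun p : (∀ j, α j) × α i => Function.update p.1 i p.2)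
      ((Measure.pi μ).prod (μ i)) (Measure.pi μ) := by
  refine ⟨measurable_update', (Measure.pi_eq fun s hs => ?_).symm⟩
  have hpre : (fun p : (∀ j, α j) × α i => Function.update p.1 i p.2) ⁻¹' univ.pi s =
      univ.pi (Function.update s i univ) ×ˢ s i := by
    ext ⟨y, t⟩
    simp only [mem_preimage, mem_univ_pi, mem_prod, Function.forall_update_iff, and_comm,
      and_congr_right_iff]
    refine fun _ => ⟨fun h j => ?_, fun h j hj => by simpa [hj] using h j⟩
    rcases eq_or_ne j i with rfl | hj <;> simp [*]
  rw [Measure.map_apply measurable_update' (MeasurableSet.univ_pi hs), hpre,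
    Measure.prod_prod, Measure.pi_pi, ← Finset.mul_prod_erase _ _ (Finset.mem_univ i),
    ← Finset.mul_prod_erase _ (fun j => μ j (s j)) (Finset.mem_univ i)]
  simp only [Function.update_self, measure_univ, one_mul]
  rw [mul_comm]
  congr 1
  refine Finset.prod_congr rfl fun j hj => ?_
  rw [Function.update_of_ne (Finset.ne_of_mem_erase hj)]

variable {μ} {E : Type*} [NormedAddCommGroup E] {F : (∀ j, α j) → E}

theorem MeasureTheory.Integrable.ae_integrable_update (hF : Integrable F (Measure.pi μ)) (i : ι) :
    ∀ᵐ y ∂Measure.pi μ, Integrable (fun t => F (Function.update y i t)) (μ i) :=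
  ((measurePreserving_update μ i).integrable_comp_of_integrable hF).prod_right_ae

theorem integral_pi_eq_integral_integral_update [NormedSpace ℝ E]
    (hF : Integrable F (Measure.pi μ)) (i : ι) :
    ∫ x, F x ∂Measure.pi μ = ∫ y, ∫ t, F (Function.update y i t) ∂μ i ∂Measure.pi μ := by
  have hT := measurePreserving_update μ i
  calc ∫ x, F x ∂Measure.pi μ
      = ∫ x, F x ∂((Measure.pi μ).prod (μ i)).map fun p => Function.update p.1 i p.2 := by
        rw [hT.map_eq]
    _ = _ := integral_map hT.measurable.aemeasurable (by rw [hT.map_eq]; exact hF.1)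
    _ = _ := integral_prod _ (hT.integrable_comp_of_integrable hF)

end UpdateCoordinate

section LineDerivative

variable {ι : Type*} [DecidableEq ι]

theorem update_add_smul_single {R : Type*} [Semiring R] (y : ι → R) (i : ι) (t s : R) :
    Function.update y i t + s • Pi.single i 1 = Function.update y i (t + s) := by
  ext j
  rcases eq_or_ne j i with rfl | hj <;> simp [*]

theorem hasDerivAt_update_of_hasLineDerivAt {F F' : (ι → ℝ) → ℝ} {i : ι}
    (hF : ∀ x, HasLineDerivAt ℝ F (F' x) x (Pi.single i 1)) (y : ι → ℝ) (t : ℝ) :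
    HasDerivAt (fun s => F (Function.update y i s)) (F' (Function.update y i t)) t := by
  have h : HasDerivAt (fun s => F (Function.update y i t + s • Pi.single i 1))
      (F' (Function.update y i t)) (t - t) := by
    rw [sub_self]
    exact hF _
  simpa [update_add_smul_single] using h.comp_sub_const t t

variable [Fintype ι] {h : (ι → ℝ) → ℝ}

theorem DifferentiableAt.hasLineDerivAt_pderiv' {x : ι → ℝ} (hh : DifferentiableAt ℝ h x)
    (i : ι) : HasLineDerivAt ℝ h (pderiv' i h x) x (Pi.single i 1) :=
  (hh.lineDifferentiableAt (v := Pi.single i 1)).hasLineDerivAt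

theorem contDiff_pderiv' {n k : WithTop ℕ∞} (hh : ContDiff ℝ n h) (hkn : k + 1 ≤ n)
    (i : ι) : ContDiff ℝ k (pderiv' i h) := by
  have hd : Differentiable ℝ h := (hh.of_le (le_add_self.trans hkn)).differentiable one_ne_zero
  have heq : pderiv' i h = fun x => fderiv ℝ h x (Pi.single i 1) :=
    funext fun x => (hd x).lineDeriv_eq_fderiv
  rw [heq]
  exact (hh.fderiv_right hkn).clm_apply contDiff_const

end LineDerivative

section GaussianProduct

variable {ι : Type*} [Fintype ι] (m : ι → ℝ) (v : ι → ℝ≥0)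

theorem memLp_eval_pi_gaussianReal {p : ℝ≥0∞} (hp : p ≠ ∞) (j : ι) :
    MemLp (fun x : ι → ℝ => x j) p (Measure.pi fun j => gaussianReal (m j) (v j)) :=
  (memLp_id_gaussianReal' p hp).comp_measurePreserving (measurePreserving_eval _ j)

theorem integrable_eval_pi_gaussianReal (j : ι) :
    Integrable (fun x : ι → ℝ => x j) (Measure.pi fun j => gaussianReal (m j) (v j)) :=
  (memLp_eval_pi_gaussianReal m v ENNReal.one_ne_top j).integrable le_rfl

theorem memLp_eval_mul_eval_pi_gaussianReal (l n : ι) :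
    MemLp (fun x : ι → ℝ => x l * x n) 2 (Measure.pi fun j => gaussianReal (m j) (v j)) :=
  (memLp_eval_pi_gaussianReal m v (p := 4) (by simp) n).mul'
    (memLp_eval_pi_gaussianReal m v (p := 4) (by simp) l) (hpqr := ⟨by
      rw [show (4 : ℝ≥0∞) = 2 * 2 by norm_num, ENNReal.mul_inv (by simp) (by simp),
        ← ENNReal.div_eq_inv_mul, ENNReal.add_halves]⟩)

theorem integrable_eval_mul_eval_pi_gaussianReal (l n : ι) :
    Integrable (fun x : ι → ℝ => x l * x n) (Measure.pi fun j => gaussianReal (m j) (v j)) :=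
  (memLp_eval_mul_eval_pi_gaussianReal m v l n).integrable one_le_two

theorem integrable_eval_mul_eval_mul_eval_pi_gaussianReal (k l n : ι) :
    Integrable (fun x : ι → ℝ => x k * (x l * x n))
      (Measure.pi fun j => gaussianReal (m j) (v j)) :=
  (memLp_eval_pi_gaussianReal m v (p := 2) (by simp) k).integrable_mul
    (memLp_eval_mul_eval_pi_gaussianReal m v l n)

variable [DecidableEq ι]

theorem integral_eval_sub_mul_pi_gaussianReal (i : ι) {F F' : (ι → ℝ) → ℝ}
    (hF : ∀ x, HasLineDerivAt ℝ F (F' x) x (Pi.single i 1))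
    (hFi : Integrable F (Measure.pi fun j => gaussianReal (m j) (v j)))
    (hF'i : Integrable F' (Measure.pi fun j => gaussianReal (m j) (v j)))
    (hxF : Integrable (fun x => (x i - m i) * F x) (Measure.pi fun j => gaussianReal (m j) (v j))) :
    ∫ x, (x i - m i) * F x ∂Measure.pi (fun j => gaussianReal (m j) (v j)) =
      v i * ∫ x, F' x ∂Measure.pi (fun j => gaussianReal (m j) (v j)) := by
  rw [integral_pi_eq_integral_integral_update hxF i,
    integral_pi_eq_integral_integral_update hF'i i, ← integral_const_mul]
  refine integral_congr_ae ?_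
  filter_upwards [hFi.ae_integrable_update i, hF'i.ae_integrable_update i,
    hxF.ae_integrable_update i] with y h1 h2 h3
  simpa using integral_sub_mul_gaussianReal (m i) (v i)
    (hasDerivAt_update_of_hasLineDerivAt hF y) h1 h2 (by simpa using h3)

end GaussianProduct

theorem sum_sum_eq_zero_of_antisymm {ι M : Type*} [Fintype ι] [AddCommGroup M]
    [IsAddTorsionFree M] {f : ι → ι → M} (hf : ∀ k l, f l k = -f k l) :
    ∑ k, ∑ l, f k l = 0 := by
  refine self_eq_neg.mp ?_
  simp only [← Finset.sum_neg_distrib, ← hf]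
  exact Finset.sum_comm

theorem sum_mul_eq_zero_of_antisymm {ι : Type*} [Fintype ι] {B I J : ι → ι → ι → ℝ}
    (hB1 : ∀ k l n, B k l n = -B l k n) (hB2 : ∀ k l, B k l k = 0)
    (hJ : ∀ k l n, J k l n = J l k n) {c : ℝ} (hc : c ≠ 0)
    (hIJ : ∀ k l n, l ≠ k → n ≠ k → c * I k l n = J k l n) :
    ∑ k, ∑ l, ∑ n, B k l n * I k l n = 0 := by
  have hterm : ∀ k l n, B k l n * I k l n = c⁻¹ * (B k l n * J k l n) := by
    intro k l n
    by_cases hl : l = k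
    · subst hl
      simp [self_eq_neg.mp (hB1 l l n)]
    by_cases hn : n = k
    · subst hn
      simp [hB2]
    rw [← hIJ k l n hl hn]
    field_simp
  simp only [hterm, ← Finset.mul_sum]
  rw [sum_sum_eq_zero_of_antisymm fun k l => ?_, mul_zero]
  simp only [hB1 l k, hJ l k, neg_mul, Finset.sum_neg_distrib]

section GaussianGenerator

variable {ι : Type*} [Fintype ι] [DecidableEq ι] (v : ι → ℝ≥0) {g : (ι → ℝ) → ℝ}

theorem integral_eval_mul_pderiv' (hg : ContDiff ℝ 2 g) (i : ι) {M₁ M₂ : ℝ}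
    (hM₁ : ∀ x, |pderiv' i g x| ≤ M₁) (hM₂ : ∀ x, |pderiv' i (pderiv' i g) x| ≤ M₂) :
    ∫ x, x i * pderiv' i g x ∂Measure.pi (fun j => gaussianReal 0 (v j)) =
      v i * ∫ x, pderiv' i (pderiv' i g) x ∂Measure.pi (fun j => gaussianReal 0 (v j)) := by
  have hg₁ : ContDiff ℝ 1 (pderiv' i g) := contDiff_pderiv' hg (by norm_num) i
  have hg₂ : Continuous (pderiv' i (pderiv' i g)) :=
    (contDiff_pderiv' hg₁ (k := 0) (by norm_num) i).continuous
  simpa using integral_eval_sub_mul_pi_gaussianReal 0 v i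
    (fun x => (hg₁.differentiable one_ne_zero x).hasLineDerivAt_pderiv' i)
    (Integrable.of_bound hg₁.continuous.aestronglyMeasurable M₁ (ae_of_all _ hM₁))
    (Integrable.of_bound hg₂.aestronglyMeasurable M₂ (ae_of_all _ hM₂))
    (by
      simpa using (integrable_eval_pi_gaussianReal 0 v i).mul_bdd
        hg₁.continuous.aestronglyMeasurable (ae_of_all _ hM₁))

theorem integral_eval_mul_eval_mul_pderiv' (hg : ContDiff ℝ 1 g) {k l n : ι} (hl : l ≠ k)
    (hn : n ≠ k) {M M₁ : ℝ} (hM : ∀ x, |g x| ≤ M) (hM₁ : ∀ x, |pderiv' k g x| ≤ M₁) :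
    v k * ∫ x, x l * x n * pderiv' k g x ∂Measure.pi (fun j => gaussianReal 0 (v j)) =
      ∫ x, x k * (x l * x n * g x) ∂Measure.pi (fun j => gaussianReal 0 (v j)) := by
  have hg₁ : Continuous (pderiv' k g) := (contDiff_pderiv' hg (k := 0) (by norm_num) k).continuous
  have hline : ∀ x, HasLineDerivAt ℝ (fun y => y l * y n * g y)
      (x l * x n * pderiv' k g x) x (Pi.single k 1) := fun x => by
    simpa [HasLineDerivAt, Pi.single_apply, hl, hn] using
      ((hg.differentiable one_ne_zero x).hasLineDerivAt_pderiv' k).const_mul (x l * x n)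
  symm
  simpa using integral_eval_sub_mul_pi_gaussianReal 0 v k hline
    ((integrable_eval_mul_eval_pi_gaussianReal 0 v l n).mul_bdd
      hg.continuous.aestronglyMeasurable (ae_of_all _ hM))
    ((integrable_eval_mul_eval_pi_gaussianReal 0 v l n).mul_bdd
      hg₁.aestronglyMeasurable (ae_of_all _ hM₁))
    (by
      simpa [mul_assoc] using (integrable_eval_mul_eval_mul_eval_pi_gaussianReal 0 v k l n).mul_bdd
        hg.continuous.aestronglyMeasurable (ae_of_all _ hM))

end GaussianGenerator

theorem integral_sqgGen {ι : Type*} [DecidableEq ι] [Fintype ι] {μ : Measure (ι → ℝ)}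
    (ε : ℝ) (lam : ι → ℝ) (B : ι → ι → ι → ℝ) {g : (ι → ℝ) → ℝ}
    (h₁ : ∀ i, Integrable (fun x => x i * pderiv' i g x) μ)
    (h₂ : ∀ i, Integrable (pderiv' i (pderiv' i g)) μ)
    (h₃ : ∀ k l n, Integrable (fun x => x l * x n * pderiv' k g x) μ) :
    ∫ x, sqgGen ε lam B g x ∂μ =
      ∑ i, lam i * (-∫ x, x i * pderiv' i g x ∂μ + ε / 2 * ∫ x, pderiv' i (pderiv' i g) x ∂μ)
        - ∑ k, ∑ l, ∑ n, B k l n * ∫ x, x l * x n * pderiv' k g x ∂μ := by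
  have hneg : ∀ i, Integrable (fun x => -(x i) * pderiv' i g x) μ := fun i => by
    simpa [neg_mul] using (h₁ i).neg
  have hD : ∀ k l n, Integrable (fun x => B k l n * x l * x n * pderiv' k g x) μ :=
    fun k l n => by simpa [mul_assoc] using (h₃ k l n).const_mul (B k l n)
  have hDl : ∀ k l, Integrable (fun x => ∑ n, B k l n * x l * x n * pderiv' k g x) μ :=
    fun k l => integrable_finsetSum _ fun n _ => hD k l n
  have hDk : ∀ k, Integrable (fun x => ∑ l, ∑ n, B k l n * x l * x n * pderiv' k g x) μ :=
    fun k => integrable_finsetSum _ fun l _ => hDl k l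
  have hA : ∀ i, Integrable
      (fun x => lam i * (-(x i) * pderiv' i g x + ε / 2 * pderiv' i (pderiv' i g) x)) μ :=
    fun i => ((hneg i).fun_add ((h₂ i).const_mul _)).const_mul _
  unfold sqgGen
  rw [integral_sub (integrable_finsetSum _ fun i _ => hA i)
      (integrable_finsetSum _ fun k _ => hDk k),
    integral_finsetSum _ fun i _ => hA i, integral_finsetSum _ fun k _ => hDk k]
  congr 1
  · refine Finset.sum_congr rfl fun i _ => ?_
    rw [integral_const_mul, integral_add (hneg i) ((h₂ i).const_mul _), integral_const_mul]
    simp only [neg_mul, integral_neg]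
  · refine Finset.sum_congr rfl fun k _ => ?_
    rw [integral_finsetSum _ fun l _ => hDl k l]
    refine Finset.sum_congr rfl fun l _ => ?_
    rw [integral_finsetSum _ fun n _ => hD k l n]
    simp only [mul_assoc, integral_const_mul]

theorem stmt_14_general (ι : Type*) [DecidableEq ι] [Fintype ι]
    (ε : ℝ) (hε : 0 < ε) (lam : ι → ℝ) (B : ι → ι → ι → ℝ)
    (hB1 : ∀ k l n, B k l n = -(B l k n)) (hB2 : ∀ k l, B k l k = 0)
    (g : (ι → ℝ) → ℝ) (hg : ContDiff ℝ 2 g)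
    (hgb : ∃ M : ℝ, ∀ x, |g x| ≤ M)
    (hgb1 : ∀ i, ∃ M : ℝ, ∀ x, |pderiv' i g x| ≤ M)
    (hgb2 : ∀ i j, ∃ M : ℝ, ∀ x, |pderiv' i (pderiv' j g) x| ≤ M) :
    (∫ x, sqgGen ε lam B g x
        ∂(Measure.pi fun _ : ι => gaussianReal 0 (ε / 2).toNNReal)) = 0 := by
  obtain ⟨M, hM⟩ := hgb
  choose M₁ hM₁ using hgb1
  choose M₂ hM₂ using hgb2
  set V := (ε / 2).toNNReal
  have hV : (V : ℝ) = ε / 2 := Real.coe_toNNReal _ (by positivity)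
  have hg₁ : ∀ i, ContDiff ℝ 1 (pderiv' i g) := fun i => contDiff_pderiv' hg (by norm_num) i
  have hou := fun i => integral_eval_mul_pderiv' (fun _ => V) hg i (hM₁ i) (hM₂ i i)
  have hdrift := sum_mul_eq_zero_of_antisymm hB1 hB2
    (J := fun k l n => ∫ x, x k * (x l * x n * g x) ∂Measure.pi (fun _ : ι => gaussianReal 0 V))
    (fun k l n => integral_congr_ae (ae_of_all _ fun x => by ring)) (by rw [hV]; positivity)
    (fun k l n hl hn => integral_eval_mul_eval_mul_pderiv' (fun _ => V) (hg.of_le (by norm_num))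
      hl hn hM (hM₁ k))
  rw [integral_sqgGen ε lam B
    (fun i => (integrable_eval_pi_gaussianReal (fun _ => 0) (fun _ => V) i).mul_bdd
      (hg₁ i).continuous.aestronglyMeasurable (ae_of_all _ (hM₁ i)))
    (fun i => Integrable.of_bound
      (contDiff_pderiv' (hg₁ i) (k := 0) (by norm_num) i).continuous.aestronglyMeasurable
      (M₂ i i) (ae_of_all _ (hM₂ i i)))
    (fun k l n => (integrable_eval_mul_eval_pi_gaussianReal (fun _ => 0) (fun _ => V) l n).mul_bdd
      (hg₁ k).continuous.aestronglyMeasurable (ae_of_all _ (hM₁ k))), hdrift]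
  simp [hou, hV]

/-- Infinitesimal invariance of the Gaussian measure `⊗ᵢ 𝒢(0, ε/2)` for the Galerkin
SQG dynamics: `∫ (Lg) dμ = 0`. -/
theorem stmt_14 (ι : Type*) [DecidableEq ι] [Fintype ι] [Nonempty ι]
    (ε : ℝ) (hε : 0 < ε) (lam : ι → ℝ) (B : ι → ι → ι → ℝ)
    (hB1 : ∀ k l n, B k l n = -(B l k n)) (hB2 : ∀ k l, B k l k = 0)
    (g : (ι → ℝ) → ℝ) (hg : ContDiff ℝ 2 g)
    (hgb : ∃ M : ℝ, ∀ x, |g x| ≤ M)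
    (hgb1 : ∀ i, ∃ M : ℝ, ∀ x, |pderiv' i g x| ≤ M)
    (hgb2 : ∀ i j, ∃ M : ℝ, ∀ x, |pderiv' i (pderiv' j g) x| ≤ M) :
    (∫ x, sqgGen ε lam B g x
        ∂(Measure.pi fun _ : ι => gaussianReal 0 (ε / 2).toNNReal)) = 0 :=
  stmt_14_general ι ε hε lam B hB1 hB2 g hg hgb hgb1 hgb2
end

section
/- Let X be a regular Hausdorff topological space equipped with its Borel σ-algebra, let 𝔗 : X → X be a continuous map with 𝔗 ∘ 𝔗 = id, let I : X → [0,∞] be lower semicontinuous, let C ⊆ X, and for each ε ∈ (0,1) let μ_ε be a Borel probability measure on X whose pushforward under 𝔗 equals μ_ε. Assume: (i) for every closed set F ⊆ X, limsup_{ε→0⁺} ε·log μ_ε(F) ≤ −inf_{x∈F} I(x); and (ii) for every open set G ⊆ X, liminf_{ε→0⁺} ε·log μ_ε(G) ≥ −inf_{x∈G∩C} I(x); with the conventions log 0 = −∞ and inf over the empty set = +∞. Then I(𝔗θ) ≤ I(θ) for every θ ∈ C. Consequently, if θ ∈ C and 𝔗θ ∈ C, then I(𝔗θ) = I(θ). 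-/
/-!
Suppose `c < I(𝔗θ)` for some `θ ∈ C`. By lower semicontinuity and regularity there is a closed
neighbourhood `F` of `𝔗θ` on which `I > c`, and `G = 𝔗⁻¹(int F)` is an open neighbourhood of `θ`.
Invariance of `μ_ε` under `𝔗` gives `μ_ε(G) = μ_ε(int F) ≤ μ_ε(F)`, so the lower bound on `G` and
the upper bound on `F` combine to `c ≤ inf_F I ≤ inf_{G ∩ C} I ≤ I(θ)`. Equality follows by
applying the inequality to `𝔗θ` as well, since `𝔗` is an involution.
-/

open MeasureTheory Filter
open scoped ENNReal Topology

theorem EReal.mul_log_le_mul_log {ε : ℝ} (hε : 0 ≤ ε) {a b : ℝ≥0∞} (hab : a ≤ b) :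
    (ε : EReal) * ENNReal.log a ≤ ε * ENNReal.log b :=
  mul_le_mul_of_nonneg_left (ENNReal.log_monotone hab) (EReal.coe_nonneg.mpr hε)

theorem iInf_le_iInf_of_large_deviations_bounds {X : Type*} [MeasurableSpace X]
    {μ : ℝ → Measure X} {I : X → ℝ≥0∞} {F G S : Set X}
    (hGF : ∀ᶠ ε in 𝓝[>] (0 : ℝ), μ ε G ≤ μ ε F)
    (hupper : limsup (fun ε : ℝ => (ε : EReal) * ENNReal.log (μ ε F)) (𝓝[>] (0 : ℝ))
        ≤ -((⨅ x ∈ F, I x : ℝ≥0∞) : EReal))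
    (hlower : -((⨅ x ∈ S, I x : ℝ≥0∞) : EReal)
        ≤ liminf (fun ε : ℝ => (ε : EReal) * ENNReal.log (μ ε G)) (𝓝[>] (0 : ℝ))) :
    ⨅ x ∈ F, I x ≤ ⨅ x ∈ S, I x := by
  have hlog : ∀ᶠ ε : ℝ in 𝓝[>] 0,
      (ε : EReal) * ENNReal.log (μ ε G) ≤ (ε : EReal) * ENNReal.log (μ ε F) :=
    (hGF.and self_mem_nhdsWithin).mono fun ε ⟨hle, hε⟩ =>
      EReal.mul_log_le_mul_log (le_of_lt hε) hle
  have hneg := calc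
    -((⨅ x ∈ S, I x : ℝ≥0∞) : EReal)
      ≤ liminf (fun ε : ℝ => (ε : EReal) * ENNReal.log (μ ε G)) (𝓝[>] 0) := hlower
    _ ≤ liminf (fun ε : ℝ => (ε : EReal) * ENNReal.log (μ ε F)) (𝓝[>] 0) :=
      liminf_le_liminf hlog
    _ ≤ limsup (fun ε : ℝ => (ε : EReal) * ENNReal.log (μ ε F)) (𝓝[>] 0) := liminf_le_limsup
    _ ≤ -((⨅ x ∈ F, I x : ℝ≥0∞) : EReal) := hupper
  exact_mod_cast EReal.neg_le_neg_iff.mp hneg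

theorem LowerSemicontinuous.exists_isClosed_mem_nhds_lt {X α : Type*} [TopologicalSpace X]
    [RegularSpace X] [Preorder α] {f : X → α} (hf : LowerSemicontinuous f) {x : X} {c : α}
    (hc : c < f x) : ∃ F ∈ 𝓝 x, IsClosed F ∧ ∀ y ∈ F, c < f y := by
  obtain ⟨F, ⟨hFx, hFc⟩, hF⟩ := (closed_nhds_basis x).mem_iff.mp (hf x c hc)
  exact ⟨F, hFx, hFc, hF⟩

theorem apply_le_of_map_eq_of_large_deviations_bounds {X : Type*} [TopologicalSpace X]
    [RegularSpace X] [MeasurableSpace X] [BorelSpace X] {T : X → X} (hT : Continuous T)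
    {I : X → ℝ≥0∞} (hI : LowerSemicontinuous I) {C : Set X} {μ : ℝ → Measure X}
    (hinv : ∀ᶠ ε in 𝓝[>] (0 : ℝ), (μ ε).map T = μ ε)
    (hupper : ∀ F : Set X, IsClosed F →
      limsup (fun ε : ℝ => (ε : EReal) * ENNReal.log (μ ε F)) (𝓝[>] (0 : ℝ))
        ≤ -((⨅ x ∈ F, I x : ℝ≥0∞) : EReal))
    (hlower : ∀ G : Set X, IsOpen G →
      -((⨅ x ∈ G ∩ C, I x : ℝ≥0∞) : EReal)
        ≤ liminf (fun ε : ℝ => (ε : EReal) * ENNReal.log (μ ε G)) (𝓝[>] (0 : ℝ)))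
    {θ : X} (hθ : θ ∈ C) : I (T θ) ≤ I θ := by
  refine le_of_forall_lt_imp_le_of_dense fun c hc => ?_
  obtain ⟨F, hFθ, hFc, hIF⟩ := hI.exists_isClosed_mem_nhds_lt hc
  set G := T ⁻¹' interior F
  have hθG : θ ∈ G := mem_interior_iff_mem_nhds.mpr hFθ
  have hGF : ∀ᶠ ε in 𝓝[>] (0 : ℝ), μ ε G ≤ μ ε F := hinv.mono fun ε hε => calc
    μ ε G = (μ ε).map T (interior F) :=
      (Measure.map_apply hT.measurable isOpen_interior.measurableSet).symm
    _ = μ ε (interior F) := by rw [hε]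
    _ ≤ μ ε F := measure_mono interior_subset
  calc c ≤ ⨅ x ∈ F, I x := le_iInf₂ fun x hx => (hIF x hx).le
    _ ≤ ⨅ x ∈ G ∩ C, I x := iInf_le_iInf_of_large_deviations_bounds hGF (hupper F hFc)
        (hlower G (isOpen_interior.preimage hT))
    _ ≤ I θ := biInf_le I ⟨hθG, hθ⟩

theorem stmt_17_general {X : Type*} [TopologicalSpace X] [RegularSpace X]
    [MeasurableSpace X] [BorelSpace X]
    (𝔗 : X → X) (h𝔗c : Continuous 𝔗) (h𝔗i : 𝔗 ∘ 𝔗 = id)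
    (I : X → ℝ≥0∞) (hI : LowerSemicontinuous I) (C : Set X)
    (μ : ℝ → Measure X)
    (hinv : ∀ ε ∈ Set.Ioo (0 : ℝ) 1, (μ ε).map 𝔗 = μ ε)
    (hupper : ∀ F : Set X, IsClosed F →
      limsup (fun ε : ℝ => (ε : EReal) * ENNReal.log (μ ε F)) (𝓝[>] (0 : ℝ))
        ≤ -((⨅ x ∈ F, I x : ℝ≥0∞) : EReal))
    (hlower : ∀ G : Set X, IsOpen G →
      -((⨅ x ∈ G ∩ C, I x : ℝ≥0∞) : EReal)
        ≤ liminf (fun ε : ℝ => (ε : EReal) * ENNReal.log (μ ε G)) (𝓝[>] (0 : ℝ))) :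
    (∀ θ ∈ C, I (𝔗 θ) ≤ I θ) ∧
    (∀ θ ∈ C, 𝔗 θ ∈ C → I (𝔗 θ) = I θ) := by
  have hinv' : ∀ᶠ ε in 𝓝[>] (0 : ℝ), (μ ε).map 𝔗 = μ ε :=
    eventually_of_mem (Ioo_mem_nhdsGT one_pos) hinv
  have key : ∀ θ ∈ C, I (𝔗 θ) ≤ I θ := fun θ hθ =>
    apply_le_of_map_eq_of_large_deviations_bounds h𝔗c hI hinv' hupper hlower hθ
  refine ⟨key, fun θ hθ h𝔗θ => (key θ hθ).antisymm ?_⟩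
  simpa only [← Function.comp_apply (f := 𝔗) (g := 𝔗), h𝔗i, id] using key (𝔗 θ) h𝔗θ

/-- Time-reversal invariance and matching large-deviations bounds force the rate function
to be invariant under time reversal: if the measures `μ_ε` are invariant under a
continuous involution `𝔗`, satisfy the large deviations upper bound with rate `I` on all
closed sets and the lower bound restricted to `C` on all open sets, then `I(𝔗θ) ≤ I(θ)`
for every `θ ∈ C`; consequently `I(𝔗θ) = I(θ)` whenever both `θ ∈ C` and `𝔗θ ∈ C`. -/
theorem stmt_17 {X : Type*} [TopologicalSpace X] [T2Space X] [RegularSpace X]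
    [MeasurableSpace X] [BorelSpace X]
    (𝔗 : X → X) (h𝔗c : Continuous 𝔗) (h𝔗i : 𝔗 ∘ 𝔗 = id)
    (I : X → ℝ≥0∞) (hI : LowerSemicontinuous I) (C : Set X)
    (μ : ℝ → Measure X)
    (hprob : ∀ ε ∈ Set.Ioo (0 : ℝ) 1, IsProbabilityMeasure (μ ε))
    (hinv : ∀ ε ∈ Set.Ioo (0 : ℝ) 1, (μ ε).map 𝔗 = μ ε)
    (hupper : ∀ F : Set X, IsClosed F →
      limsup (fun ε : ℝ => (ε : EReal) * ENNReal.log (μ ε F)) (𝓝[>] (0 : ℝ))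
        ≤ -((⨅ x ∈ F, I x : ℝ≥0∞) : EReal))
    (hlower : ∀ G : Set X, IsOpen G →
      -((⨅ x ∈ G ∩ C, I x : ℝ≥0∞) : EReal)
        ≤ liminf (fun ε : ℝ => (ε : EReal) * ENNReal.log (μ ε G)) (𝓝[>] (0 : ℝ))) :
    (∀ θ ∈ C, I (𝔗 θ) ≤ I θ) ∧
    (∀ θ ∈ C, 𝔗 θ ∈ C → I (𝔗 θ) = I θ) :=
  stmt_17_general 𝔗 h𝔗c h𝔗i I hI C μ hinv hupper hlower
end

section
/- Let s > 1 be a real number. Then there exists a constant C > 0, depending only on s, such that for every δ ∈ (0,1] and every η ∈ (0, 1/2]: ∑_{k∈ℤ²∖{0}} (−1/2)·log( 1 − η/(1 + δ·‖k‖^{2s}) ) ≤ η · ∑_{k∈ℤ²∖{0}} 1/(1 + δ·‖k‖^{2s}) ≤ C·η·δ^{−1/s}, and in particular both series converge. -/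
open scoped ENNReal

/-!
Put `R = δ^{-1/(2s)}`, so that `δ‖k‖^{2s} = (‖k‖/R)^{2s}` and `R² = δ^{-1/s}`. Since
`(1 + |k₁|/R)(1 + |k₂|/R) ≤ (1 + ‖k‖/R)²` and `(1 + x)^{2s} ≤ 2^{2s}(1 + x^{2s})`, the weight
`1/(1 + δ‖k‖^{2s})` is at most `2^{2s} w(k₁) w(k₂)` with `w(n) = (1 + |n|/R)^{-s}`, so the lattice
sum is bounded by the square of a one-dimensional sum. Cutting `ℕ` into blocks of length `⌈R⌉`, on
the `q`-th of which `w ≤ (q + 1)^{-s}`, bounds that sum by `4 ζ(s) R`. The logarithmic series is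
compared termwise, using `-log (1 - x) ≤ 2x` for `0 ≤ x ≤ 1/2`.
-/

open Real

namespace ENNReal

theorem tsum_le_mul_tsum_of_antitone {f : ℕ → ℝ≥0∞} (hf : Antitone f) (N : ℕ) [NeZero N] :
    ∑' n, f n ≤ N * ∑' q, f (q * N) :=
  calc ∑' n, f n = ∑' p : ℕ × Fin N, f (p.1 * N + p.2) :=
        ((Nat.divModEquiv N).symm.tsum_eq f).symm
    _ ≤ ∑' p : ℕ × Fin N, f (p.1 * N) :=
        ENNReal.tsum_le_tsum fun _ => hf (Nat.le_add_right _ _)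
    _ = N * ∑' q, f (q * N) := by
        simp [ENNReal.tsum_prod', ENNReal.tsum_mul_left]

theorem tsum_int_natAbs_le_two_mul {f : ℕ → ℝ≥0∞} (hf : Antitone f) :
    ∑' n : ℤ, f n.natAbs ≤ 2 * ∑' n, f n := by
  rw [← tsum_nat_add_neg_add_one ENNReal.summable, two_mul, ← ENNReal.tsum_add]
  refine ENNReal.tsum_le_tsum fun n => add_le_add (le_of_eq (by simp)) (hf ?_)
  omega

end ENNReal

theorem Real.neg_log_one_sub_le_two_mul {x : ℝ} (hx0 : 0 ≤ x) (hx : x ≤ 1 / 2) :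
    -log (1 - x) ≤ 2 * x := by
  have hlog := one_sub_inv_le_log_of_pos (show 0 < 1 - x by linarith)
  have hinv : (1 - x)⁻¹ - 1 ≤ 2 * x := by
    rw [inv_eq_one_div, div_sub_one (by linarith), div_le_iff₀ (by linarith)]
    nlinarith
  linarith

theorem Real.one_add_rpow_le {x p : ℝ} (hx : 0 ≤ x) (hp : 0 ≤ p) :
    (1 + x) ^ p ≤ 2 ^ p * (1 + x ^ p) := by
  rcases le_total x 1 with h | h
  · calc (1 + x) ^ p ≤ 2 ^ p := by gcongr; linarith
      _ ≤ 2 ^ p * (1 + x ^ p) := le_mul_of_one_le_right (by positivity) (by simp; positivity)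
  · calc (1 + x) ^ p ≤ (2 * x) ^ p := by gcongr; linarith
      _ = 2 ^ p * x ^ p := mul_rpow (by norm_num) hx
      _ ≤ 2 ^ p * (1 + x ^ p) := by gcongr; linarith

theorem Real.one_div_one_add_rpow_le {a b x p : ℝ} (ha : 0 ≤ a) (hb : 0 ≤ b) (hax : a ≤ x)
    (hbx : b ≤ x) (hp : 0 ≤ p) :
    1 / (1 + x ^ (2 * p)) ≤ 2 ^ (2 * p) * (1 + a) ^ (-p) * (1 + b) ^ (-p) := by
  have hprod : (1 + a) * (1 + b) ≤ (1 + x) ^ 2 := by nlinarith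
  have hpow : ((1 + a) * (1 + b)) ^ p ≤ 2 ^ (2 * p) * (1 + x ^ (2 * p)) :=
    calc ((1 + a) * (1 + b)) ^ p ≤ ((1 + x) ^ 2) ^ p := by gcongr
      _ = (1 + x) ^ (2 * p) := by
          rw [← rpow_natCast, ← rpow_mul (by linarith)]; norm_num
      _ ≤ 2 ^ (2 * p) * (1 + x ^ (2 * p)) := one_add_rpow_le (by linarith) (by linarith)
  have hden : 0 < 1 + x ^ (2 * p) := by have := rpow_nonneg (ha.trans hax) (2 * p); linarith
  rw [mul_assoc, ← mul_rpow (by linarith) (by linarith), rpow_neg (by positivity),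
    ← div_eq_mul_inv, div_le_div_iff₀ hden (by positivity), one_mul]
  exact hpow

noncomputable def realZeta (s : ℝ) : ℝ := ∑' q : ℕ, ((q : ℝ) + 1) ^ (-s)

section Zeta

variable {s : ℝ}

theorem summable_nat_add_one_rpow_neg (hs : 1 < s) :
    Summable fun q : ℕ => ((q : ℝ) + 1) ^ (-s) := by
  have h := (summable_nat_add_iff 1).2 (Real.summable_nat_rpow.2 (neg_lt_neg hs))
  exact_mod_cast h

theorem one_le_realZeta (hs : 1 < s) : 1 ≤ realZeta s := by
  simpa [realZeta] using (summable_nat_add_one_rpow_neg hs).le_tsum 0 fun _ _ => by positivity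

theorem ofReal_realZeta (hs : 1 < s) :
    ENNReal.ofReal (realZeta s) = ∑' q : ℕ, ENNReal.ofReal (((q : ℝ) + 1) ^ (-s)) :=
  ENNReal.ofReal_tsum_of_nonneg (fun _ => by positivity) (summable_nat_add_one_rpow_neg hs)

end Zeta

section DecaySums

variable {s R : ℝ}

theorem antitone_ofReal_one_add_div_rpow_neg (hs : 0 ≤ s) (hR : 0 < R) :
    Antitone fun n : ℕ => ENNReal.ofReal ((1 + n / R) ^ (-s)) := fun m n hmn =>
  ENNReal.ofReal_le_ofReal <|
    rpow_le_rpow_of_nonpos (by positivity) (by gcongr) (neg_nonpos.2 hs)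

theorem tsum_nat_ofReal_one_add_div_rpow_neg_le (hs : 1 < s) (hR : 1 ≤ R) :
    ∑' n : ℕ, ENNReal.ofReal ((1 + n / R) ^ (-s)) ≤ ENNReal.ofReal (2 * R * realZeta s) := by
  have hR0 : 0 < R := one_pos.trans_le hR
  set N := ⌈R⌉₊
  have : NeZero N := ⟨(Nat.ceil_pos.2 hR0).ne'⟩
  have hN : (N : ℝ) ≤ 2 * R := by linarith [Nat.ceil_lt_add_one hR0.le]
  have hblock (q : ℕ) : (1 + ((q * N : ℕ) : ℝ) / R) ^ (-s) ≤ ((q : ℝ) + 1) ^ (-s) := by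
    refine rpow_le_rpow_of_nonpos (by positivity) ?_ (by linarith)
    have : (q : ℝ) * R ≤ q * N := by gcongr; exact Nat.le_ceil R
    rw [add_comm, Nat.cast_mul]
    gcongr
    rwa [le_div_iff₀ hR0]
  calc ∑' n : ℕ, ENNReal.ofReal ((1 + n / R) ^ (-s))
      ≤ N * ∑' q : ℕ, ENNReal.ofReal ((1 + ((q * N : ℕ) : ℝ) / R) ^ (-s)) :=
        ENNReal.tsum_le_mul_tsum_of_antitone
          (antitone_ofReal_one_add_div_rpow_neg (by linarith) hR0) N
    _ ≤ ENNReal.ofReal (2 * R) * ∑' q : ℕ, ENNReal.ofReal (((q : ℝ) + 1) ^ (-s)) := by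
        refine mul_le_mul' ?_ (ENNReal.tsum_le_tsum fun q => ENNReal.ofReal_le_ofReal (hblock q))
        rw [← ENNReal.ofReal_natCast]
        exact ENNReal.ofReal_le_ofReal hN
    _ = ENNReal.ofReal (2 * R * realZeta s) := by
        rw [← ofReal_realZeta hs, ← ENNReal.ofReal_mul (by positivity)]

theorem tsum_int_ofReal_one_add_abs_div_rpow_neg_le (hs : 1 < s) (hR : 1 ≤ R) :
    ∑' n : ℤ, ENNReal.ofReal ((1 + |(n : ℝ)| / R) ^ (-s)) ≤
      ENNReal.ofReal (4 * R * realZeta s) := by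
  have hR0 : 0 < R := one_pos.trans_le hR
  calc ∑' n : ℤ, ENNReal.ofReal ((1 + |(n : ℝ)| / R) ^ (-s))
      = ∑' n : ℤ, ENNReal.ofReal ((1 + (n.natAbs : ℝ) / R) ^ (-s)) := by
        simp only [Nat.cast_natAbs, Int.cast_abs]
    _ ≤ 2 * ∑' n : ℕ, ENNReal.ofReal ((1 + n / R) ^ (-s)) :=
        ENNReal.tsum_int_natAbs_le_two_mul
          (antitone_ofReal_one_add_div_rpow_neg (by linarith) hR0)
    _ ≤ 2 * ENNReal.ofReal (2 * R * realZeta s) := by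
        gcongr; exact tsum_nat_ofReal_one_add_div_rpow_neg_le hs hR
    _ = ENNReal.ofReal (4 * R * realZeta s) := by
        rw [← ENNReal.ofReal_ofNat 2, ← ENNReal.ofReal_mul (by norm_num)]; ring_nf

end DecaySums

theorem latticeNorm_nonneg (k : ℤ × ℤ) : 0 ≤ latticeNorm k :=
  sqrt_nonneg _

theorem abs_fst_le_latticeNorm (k : ℤ × ℤ) : |(k.1 : ℝ)| ≤ latticeNorm k :=
  abs_le_sqrt (by nlinarith [sq_nonneg (k.2 : ℝ)])

theorem abs_snd_le_latticeNorm (k : ℤ × ℤ) : |(k.2 : ℝ)| ≤ latticeNorm k :=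
  abs_le_sqrt (by nlinarith [sq_nonneg (k.1 : ℝ)])

theorem one_div_one_add_mul_latticeNorm_rpow_le {s δ R : ℝ} (hs : 0 ≤ s) (hR : 0 < R)
    (hδR : δ = (R ^ (2 * s))⁻¹) (k : ℤ × ℤ) :
    1 / (1 + δ * latticeNorm k ^ (2 * s)) ≤
      2 ^ (2 * s) * (1 + |(k.1 : ℝ)| / R) ^ (-s) * (1 + |(k.2 : ℝ)| / R) ^ (-s) := by
  have hscale : δ * latticeNorm k ^ (2 * s) = (latticeNorm k / R) ^ (2 * s) := by
    rw [hδR, div_rpow (latticeNorm_nonneg k) hR.le, inv_mul_eq_div]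
  rw [hscale]
  exact one_div_one_add_rpow_le (by positivity) (by positivity)
    (by gcongr; exact abs_fst_le_latticeNorm k) (by gcongr; exact abs_snd_le_latticeNorm k) hs

theorem tsum_ofReal_one_div_one_add_mul_latticeNorm_rpow_le {s δ : ℝ} (hs : 1 < s)
    (hδ : δ ∈ Set.Ioc (0 : ℝ) 1) :
    ∑' k : {k : ℤ × ℤ // k ≠ 0}, ENNReal.ofReal (1 / (1 + δ * latticeNorm k ^ (2 * s))) ≤
      ENNReal.ofReal (16 * 2 ^ (2 * s) * realZeta s ^ 2 * δ ^ (-1 / s)) := by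
  obtain ⟨hδ0, hδ1⟩ := hδ
  set R := δ ^ (-(1 / (2 * s)))
  have hR0 : 0 < R := rpow_pos_of_pos hδ0 _
  have hR1 : 1 ≤ R := one_le_rpow_of_pos_of_le_one_of_nonpos hδ0 hδ1 (by
    have : 0 < s := by linarith
    rw [neg_nonpos]; positivity)
  have hδR : δ = (R ^ (2 * s))⁻¹ := by
    rw [← rpow_mul hδ0.le, show -(1 / (2 * s)) * (2 * s) = -1 by field_simp, rpow_neg_one,
      inv_inv]
  have hRR : R * R = δ ^ (-1 / s) := by
    rw [← rpow_add hδ0]; congr 1; field_simp; ring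
  set w : ℤ → ℝ≥0∞ := fun n => ENNReal.ofReal ((1 + |(n : ℝ)| / R) ^ (-s))
  have hw : ∑' n, w n ≤ ENNReal.ofReal (4 * R * realZeta s) :=
    tsum_int_ofReal_one_add_abs_div_rpow_neg_le hs hR1
  calc ∑' k : {k : ℤ × ℤ // k ≠ 0}, ENNReal.ofReal (1 / (1 + δ * latticeNorm k ^ (2 * s)))
      ≤ ∑' k : ℤ × ℤ, ENNReal.ofReal (1 / (1 + δ * latticeNorm k ^ (2 * s))) :=
        ENNReal.tsum_comp_le_tsum_of_injective Subtype.val_injective _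
    _ ≤ ∑' k : ℤ × ℤ, ENNReal.ofReal (2 ^ (2 * s)) * w k.1 * w k.2 := by
        refine ENNReal.tsum_le_tsum fun k => ?_
        rw [← ENNReal.ofReal_mul (by positivity), ← ENNReal.ofReal_mul (by positivity)]
        exact ENNReal.ofReal_le_ofReal
          (one_div_one_add_mul_latticeNorm_rpow_le (by linarith) hR0 hδR k)
    _ = ENNReal.ofReal (2 ^ (2 * s)) * (∑' n, w n) * ∑' n, w n := by
        simp only [ENNReal.tsum_prod', mul_assoc, ENNReal.tsum_mul_left, ENNReal.tsum_mul_right]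
    _ ≤ ENNReal.ofReal (2 ^ (2 * s)) * ENNReal.ofReal (4 * R * realZeta s) *
          ENNReal.ofReal (4 * R * realZeta s) := by gcongr
    _ = ENNReal.ofReal (16 * 2 ^ (2 * s) * realZeta s ^ 2 * δ ^ (-1 / s)) := by
        have := one_le_realZeta hs
        rw [← ENNReal.ofReal_mul (by positivity), ← ENNReal.ofReal_mul (by positivity), ← hRR]
        ring_nf

/-- Logarithmic moment generating function bound for the regularized Gaussian initial
data: `∑_{k≠0} (−1/2) log(1 − η/(1+δ‖k‖^{2s})) ≤ η ∑_{k≠0} 1/(1+δ‖k‖^{2s}) ≤ C η δ^{−1/s}`. -/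
theorem stmt_18 (s : ℝ) (hs : 1 < s) :
    ∃ C : ℝ, 0 < C ∧ ∀ δ : ℝ, δ ∈ Set.Ioc (0 : ℝ) 1 →
      ∀ η : ℝ, η ∈ Set.Ioc (0 : ℝ) (1 / 2) →
        (∑' k : {k : ℤ × ℤ // k ≠ 0},
            ENNReal.ofReal
              ((-(1 / 2)) * Real.log (1 - η / (1 + δ * latticeNorm k ^ (2 * s)))))
          ≤ ENNReal.ofReal η *
              ∑' k : {k : ℤ × ℤ // k ≠ 0},
                ENNReal.ofReal (1 / (1 + δ * latticeNorm k ^ (2 * s))) ∧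
        ENNReal.ofReal η *
            (∑' k : {k : ℤ × ℤ // k ≠ 0},
              ENNReal.ofReal (1 / (1 + δ * latticeNorm k ^ (2 * s))))
          ≤ ENNReal.ofReal (C * η * δ ^ (-1 / s)) := by
  have hζ := one_le_realZeta hs
  refine ⟨16 * 2 ^ (2 * s) * realZeta s ^ 2, by positivity, fun δ hδ η ⟨hη0, hη⟩ => ⟨?_, ?_⟩⟩
  · rw [← ENNReal.tsum_mul_left]
    refine ENNReal.tsum_le_tsum fun k => ?_
    have hD : 0 ≤ δ * latticeNorm k ^ (2 * s) :=
      mul_nonneg hδ.1.le (rpow_nonneg (latticeNorm_nonneg k) _)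
    have hx : η / (1 + δ * latticeNorm k ^ (2 * s)) ≤ η := div_le_self hη0.le (by linarith)
    have hlog := neg_log_one_sub_le_two_mul (by positivity) (hx.trans hη)
    rw [← ENNReal.ofReal_mul hη0.le, mul_one_div]
    exact ENNReal.ofReal_le_ofReal (by linarith)
  · calc _ ≤ ENNReal.ofReal η *
          ENNReal.ofReal (16 * 2 ^ (2 * s) * realZeta s ^ 2 * δ ^ (-1 / s)) := by
          gcongr; exact tsum_ofReal_one_div_one_add_mul_latticeNorm_rpow_le hs hδ
      _ = _ := by rw [← ENNReal.ofReal_mul hη0.le]; ring_nf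
end
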